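/- arXiv:2409.11101 — 2 statements merged into one kernel-verified Lean document; each statement's English description precedes it below -/
import Mathlib

section
/- Let T₁, ..., T_n be commuting bounded operators on a Hilbert space such that T_n is normal with T_n^* T_n = I = T_n T_n^*, and (T_n^p)^* T_j = T_{n-j}^* for j = 1, ..., n-1 (p a positive integer). Then each T_j, j = 1, ..., n-1, is a normal operator. -/
open ContinuousLinearMap

/-! Write `V = Tₙ^p`, `A = Tⱼ`, `B = T_{n-j}`. The relations give `V* A = B*` and, applied to
`n - j`, `V* B = A*`, hence `A = B* V`. Since `A` and `B` commute and `V V* = 1`,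
`A* A = V* B A = V* A B = B* B = B* V V* B = A A*`. -/

theorem isStarNormal_of_star_mul_eq_star {R : Type*} [Monoid R] [StarMul R] {V A B : R}
    (hV : V * star V = 1) (hAB : Commute A B)
    (hA : star V * A = star B) (hB : star V * B = star A) : IsStarNormal A := by
  have hA_eq : A = star B * V := by simpa using (congrArg star hB).symm
  refine ⟨?_⟩
  calc star A * A = star V * (A * B) := by rw [← hB, mul_assoc, hAB.eq]
    _ = star B * B := by rw [← mul_assoc, hA]
    _ = star B * (V * star V) * B := by rw [hV, mul_one]
    _ = A * star A := by rw [← hB, hA_eq]; simp only [mul_assoc]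

theorem stmt_10_general {H : Type*}
    [NormedAddCommGroup H] [InnerProductSpace ℂ H] [CompleteSpace H]
    (n p : ℕ)
    (T : ℕ → (H →L[ℂ] H))
    (hcomm : ∀ i j, 1 ≤ i → i ≤ n → 1 ≤ j → j ≤ n → T i * T j = T j * T i)
    (hTn : adjoint (T n) * T n = 1 ∧ T n * adjoint (T n) = 1)
    (hrel : ∀ j, 1 ≤ j → j ≤ n - 1 →
      adjoint ((T n) ^ p) * T j = adjoint (T (n - j))) :
    ∀ j, 1 ≤ j → j ≤ n - 1 → adjoint (T j) * T j = T j * adjoint (T j) := by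
  simp only [← star_eq_adjoint] at hTn hrel ⊢
  intro j hj₁ hj₂
  have hunitary : T n ^ p ∈ unitary (H →L[ℂ] H) := pow_mem (Unitary.mem_iff.mpr hTn) p
  have hrel' : star (T n ^ p) * T (n - j) = star (T j) := by
    simpa [Nat.sub_sub_self (show j ≤ n by omega)] using hrel (n - j) (by omega) (by omega)
  exact (isStarNormal_of_star_mul_eq_star (Unitary.mul_star_self_of_mem hunitary)
    (hcomm j (n - j) hj₁ (by omega) (by omega) (by omega)) (hrel j hj₁ hj₂) hrel').star_comm_self

/-- If `T₁,…,Tₙ` are commuting bounded operators with `Tₙ` unitary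
(`Tₙ* Tₙ = 1 = Tₙ Tₙ*`) and `(Tₙ^p)* Tⱼ = T_{n-j}*` for `j = 1,…,n-1`,
then every `Tⱼ`, `j = 1,…,n-1`, is normal. -/
theorem stmt_10 {H : Type*}
    [NormedAddCommGroup H] [InnerProductSpace ℂ H] [CompleteSpace H]
    (n p : ℕ) (hn : 1 < n) (hp : 0 < p)
    (T : ℕ → (H →L[ℂ] H))
    (hcomm : ∀ i j, 1 ≤ i → i ≤ n → 1 ≤ j → j ≤ n → T i * T j = T j * T i)
    (hTn : adjoint (T n) * T n = 1 ∧ T n * adjoint (T n) = 1)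
    (hrel : ∀ j, 1 ≤ j → j ≤ n - 1 →
      adjoint ((T n) ^ p) * T j = adjoint (T (n - j))) :
    ∀ j, 1 ≤ j → j ≤ n - 1 → adjoint (T j) * T j = T j * adjoint (T j) :=
  stmt_10_general n p T hcomm hTn hrel
end

section
/- In the Bergman space A^{(2)}(𝔻²), let e_m(z₁,z₂) = z₁^m - z₂^m and h_m(z₁,z₂) = Σ_{k=1}^m z₁^{m-k} z₂^{k-1} (so that e_m = (z₁ - z₂)·h_m). Then ‖h_m‖²/‖e_m‖² = (m+1)/2 · Σ_{k=1}^m 1/((m+1-k)k), and this ratio tends to infinity as m → ∞. Hence the map f ↦ f/(z₁-z₂), defined on antisymmetric polynomials, is unbounded from A^{(2)}_{sign}(𝔻²) to A^{(2)}_{triv}(𝔻²). -/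
open Finset MeasureTheory Filter

open MeasureTheory Complex Real

lemma angular (n : ℤ) (hn : n ≠ 0) :
    ∫ θ : ℝ in Set.Ioo (-Real.pi) Real.pi, Complex.exp (n * θ * Complex.I) = 0 := by
  have hc : (n : ℂ) * Complex.I ≠ 0 := by
    simp [Complex.I_ne_zero, hn]
  rw [← MeasureTheory.integral_Ioc_eq_integral_Ioo,
    ← intervalIntegral.integral_of_le (by linarith [Real.pi_pos] : -Real.pi ≤ Real.pi)]
  have : ∀ θ : ℝ, (n : ℂ) * θ * Complex.I = ((n:ℂ) * Complex.I) * θ := by intro θ; ring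
  simp_rw [this]
  rw [integral_exp_mul_complex hc]
  have h1 : (n:ℂ) * Complex.I * (Real.pi:ℂ) = n * (Real.pi * Complex.I) := by ring
  have h2 : (n:ℂ) * Complex.I * ((-Real.pi:ℝ):ℂ) = ((-n : ℤ):ℂ) * (Real.pi * Complex.I) := by
    push_cast; ring
  rw [h1, h2, Complex.exp_int_mul, Complex.exp_int_mul, Complex.exp_pi_mul_I]
  rw [zpow_neg]
  rw [div_eq_zero_iff]
  left
  rw [sub_eq_zero]
  rcases Int.even_or_odd n with he | ho
  · rw [he.neg_one_zpow]; norm_num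
  · rw [ho.neg_one_zpow]; norm_num

lemma radial (k : ℕ) : ∫ r : ℝ in Set.Ioo (0:ℝ) 1, ((r:ℂ))^k = (1 : ℂ)/(k+1) := by
  have h1 : ∫ r : ℝ in Set.Ioo (0:ℝ) 1, ((r:ℂ))^k
      = ∫ r : ℝ in Set.Ioo (0:ℝ) 1, ((r^k : ℝ) : ℂ) := by
    apply integral_congr_ae
    filter_upwards with r
    push_cast
    ring
  have hreal : (∫ r : ℝ in Set.Ioo (0:ℝ) 1, r^k) = 1/((k:ℝ)+1) := by
    rw [← MeasureTheory.integral_Ioc_eq_integral_Ioo,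
      ← intervalIntegral.integral_of_le (by norm_num : (0:ℝ) ≤ 1), integral_pow]
    push_cast
    norm_num
  rw [h1, show (1:ℂ)/(k+1) = ((1/((k:ℝ)+1) : ℝ) : ℂ) by push_cast; ring, ← hreal]
  exact integral_ofReal

lemma hsymm (p : ℝ × ℝ) :
    Complex.polarCoord.symm p = (p.1:ℂ) * Complex.exp (p.2 * Complex.I) := by
  rw [Complex.polarCoord_symm_apply, Complex.exp_mul_I]
  push_cast
  ring

lemma aux_val (r θ : ℝ) (a b : ℕ) :
    (r:ℂ) * (((r:ℂ) * Complex.exp (θ * Complex.I)) ^ a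
      * (starRingEnd ℂ) ((r:ℂ) * Complex.exp (θ * Complex.I)) ^ b)
    = ((r:ℂ)) ^ (a+b+1) * Complex.exp (((a:ℤ) - b) * θ * Complex.I) := by
  rw [map_mul, Complex.conj_ofReal, ← Complex.exp_conj]
  simp only [map_mul, Complex.conj_ofReal, Complex.conj_I]
  rw [mul_pow, mul_pow, ← Complex.exp_nat_mul, ← Complex.exp_nat_mul]
  calc (r:ℂ) * ((r:ℂ)^a * Complex.exp ((a:ℂ) * ((θ:ℂ) * Complex.I))
        * ((r:ℂ)^b * Complex.exp ((b:ℂ) * ((θ:ℂ) * -Complex.I))))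
      = (r:ℂ)^(a+b+1) * (Complex.exp ((a:ℂ) * ((θ:ℂ) * Complex.I))
        * Complex.exp ((b:ℂ) * ((θ:ℂ) * -Complex.I))) := by ring
    _ = _ := by
        rw [← Complex.exp_add]
        congr 1
        push_cast
        ring

lemma oneDim (a b : ℕ) :
    ∫ z in Metric.ball (0:ℂ) 1, z ^ a * (starRingEnd ℂ) z ^ b
      = if a = b then ((Real.pi / (a+1) : ℝ) : ℂ) else 0 := by
  classical
  set f : ℂ → ℂ := (Metric.ball (0:ℂ) 1).indicator (fun z => z ^ a * (starRingEnd ℂ) z ^ b)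
    with hf
  have h0 : ∫ z in Metric.ball (0:ℂ) 1, z ^ a * (starRingEnd ℂ) z ^ b = ∫ z, f z := by
    rw [hf, integral_indicator measurableSet_ball]
  rw [h0, ← Complex.integral_comp_polarCoord_symm f]
  set s : Set (ℝ × ℝ) := Set.Ioo (0:ℝ) 1 ×ˢ Set.Ioo (-Real.pi) Real.pi with hs
  set g : ℝ × ℝ → ℂ :=
    fun p => ((p.1:ℂ)) ^ (a+b+1) * Complex.exp (((a:ℤ) - b) * p.2 * Complex.I) with hg
  have key : ∀ p ∈ polarCoord.target, p.1 • f (Complex.polarCoord.symm p)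
      = s.indicator g p := by
    intro p hp
    rw [polarCoord_target] at hp
    obtain ⟨hp1, hp2⟩ := hp
    have hp1' : 0 < p.1 := hp1
    by_cases hlt : p.1 < 1
    · have hmem : Complex.polarCoord.symm p ∈ Metric.ball (0:ℂ) 1 := by
        simp only [Metric.mem_ball, dist_zero_right, Complex.norm_polarCoord_symm, abs_of_pos hp1']
        exact hlt
      have hmems : p ∈ s := ⟨⟨hp1', hlt⟩, hp2⟩
      rw [hf, Set.indicator_of_mem hmem, Set.indicator_of_mem hmems, hg]
      simp only [hsymm p]
      rw [Complex.real_smul]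
      exact aux_val p.1 p.2 a b
    · have hmem : Complex.polarCoord.symm p ∉ Metric.ball (0:ℂ) 1 := by
        simp only [Metric.mem_ball, dist_zero_right, Complex.norm_polarCoord_symm, abs_of_pos hp1']
        exact hlt
      have hmems : p ∉ s := fun hmems => hlt hmems.1.2
      rw [hf, Set.indicator_of_notMem hmem, Set.indicator_of_notMem hmems, smul_zero]
  rw [setIntegral_congr_fun polarCoord.open_target.measurableSet key]
  have hsub : s ⊆ polarCoord.target := by
    rw [polarCoord_target, hs]
    exact Set.prod_mono Set.Ioo_subset_Ioi_self subset_rfl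
  rw [setIntegral_indicator (by rw [hs]; measurability),
    Set.inter_eq_right.mpr hsub]
  rw [hs, hg, Measure.volume_eq_prod, ← Measure.prod_restrict]
  beta_reduce
  rw [integral_prod_mul (f := fun r : ℝ => ((r:ℂ)) ^ (a+b+1))
    (g := fun θ : ℝ => Complex.exp (((a:ℤ) - b) * θ * Complex.I))]
  rw [radial (a+b+1)]
  by_cases hab : a = b
  · subst hab
    rw [if_pos rfl]
    simp only [Int.cast_natCast, sub_self, zero_mul, Complex.exp_zero]
    rw [setIntegral_const]
    rw [measureReal_def, Real.volume_Ioo]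
    rw [ENNReal.toReal_ofReal (by linarith [Real.pi_pos])]
    rw [Complex.real_smul]
    push_cast
    have h2 : ((a:ℂ) + a + 1 + 1) ≠ 0 := by
      have : (0:ℝ) < (a:ℝ) + a + 1 + 1 := by positivity
      intro hcon
      exact_mod_cast this.ne' (by exact_mod_cast congrArg Complex.re hcon)
    have h3 : ((a:ℂ) + 1) ≠ 0 := by
      have : (0:ℝ) < (a:ℝ) + 1 := by positivity
      intro hcon
      exact_mod_cast this.ne' (by exact_mod_cast congrArg Complex.re hcon)
    field_simp
    ring_nf
    have h4 : (2:ℂ) + (a:ℂ) * 2 ≠ 0 := by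
      rw [show (2:ℂ) + a*2 = 2*(a+1) by ring]; exact mul_ne_zero two_ne_zero h3
    calc _ = ((a:ℂ)*2 + 2) * (2 + (a:ℂ)*2)⁻¹ := by ring
      _ = 1 := by rw [add_comm ((a:ℂ)*2)]; exact mul_inv_cancel₀ h4
  · rw [if_neg hab]
    have hn : (a:ℤ) - b ≠ 0 := by
      intro hcon
      exact hab (by omega)
    rw [show (fun θ : ℝ => Complex.exp (((a:ℤ) - b) * θ * Complex.I))
        = fun θ : ℝ => Complex.exp ((((a:ℤ) - b : ℤ) : ℂ) * θ * Complex.I) by push_cast; rfl]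
    rw [angular _ hn, mul_zero]

lemma twoDim (a b c d : ℕ) :
    ∫ z in {z : Fin 2 → ℂ | ∀ i, ‖z i‖ < 1},
      (z 0) ^ a * (starRingEnd ℂ) (z 0) ^ c * ((z 1) ^ b * (starRingEnd ℂ) (z 1) ^ d)
    = (if a = c then ((Real.pi / (a+1) : ℝ) : ℂ) else 0)
      * (if b = d then ((Real.pi / (b+1) : ℝ) : ℂ) else 0) := by
  have hset : {z : Fin 2 → ℂ | ∀ i, ‖z i‖ < 1}
      = (MeasurableEquiv.finTwoArrow : (Fin 2 → ℂ) ≃ᵐ ℂ × ℂ) ⁻¹'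
        (Metric.ball (0:ℂ) 1 ×ˢ Metric.ball (0:ℂ) 1) := by
    ext z
    simp only [Set.mem_setOf_eq, Set.mem_preimage, Set.mem_prod, Metric.mem_ball,
      dist_zero_right, MeasurableEquiv.finTwoArrow,
      MeasurableEquiv.coe_mk, piFinTwoEquiv_apply]
    constructor
    · intro h; exact ⟨h 0, h 1⟩
    · rintro ⟨h0, h1⟩ i; fin_cases i <;> assumption
  rw [hset]
  have hid : ∫ z in (MeasurableEquiv.finTwoArrow : (Fin 2 → ℂ) ≃ᵐ ℂ × ℂ) ⁻¹'
        (Metric.ball (0:ℂ) 1 ×ˢ Metric.ball (0:ℂ) 1),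
      (z 0) ^ a * (starRingEnd ℂ) (z 0) ^ c * ((z 1) ^ b * (starRingEnd ℂ) (z 1) ^ d)
    = ∫ z in (MeasurableEquiv.finTwoArrow : (Fin 2 → ℂ) ≃ᵐ ℂ × ℂ) ⁻¹'
        (Metric.ball (0:ℂ) 1 ×ˢ Metric.ball (0:ℂ) 1),
      (fun p : ℂ × ℂ => p.1 ^ a * (starRingEnd ℂ) p.1 ^ c
        * (p.2 ^ b * (starRingEnd ℂ) p.2 ^ d)) (MeasurableEquiv.finTwoArrow z) := rfl
  rw [hid]
  rw [(volume_preserving_finTwoArrow ℂ).setIntegral_preimage_emb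
    (MeasurableEquiv.measurableEmbedding _)
    (fun p : ℂ × ℂ => p.1 ^ a * (starRingEnd ℂ) p.1 ^ c
      * (p.2 ^ b * (starRingEnd ℂ) p.2 ^ d))]
  rw [Measure.volume_eq_prod, ← Measure.prod_restrict]
  rw [integral_prod_mul (f := fun w : ℂ => w ^ a * (starRingEnd ℂ) w ^ c)
    (g := fun w : ℂ => w ^ b * (starRingEnd ℂ) w ^ d)]
  rw [oneDim a c, oneDim b d]

noncomputable def Dset : Set (Fin 2 → ℂ) := {z : Fin 2 → ℂ | ∀ i, ‖z i‖ < 1}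

lemma Dset_meas : MeasurableSet Dset := by
  have : Dset = Set.pi Set.univ (fun _ : Fin 2 => Metric.ball (0:ℂ) 1) := by
    ext z
    simp [Dset, Set.mem_pi, Metric.mem_ball, dist_zero_right]
  rw [this]
  exact MeasurableSet.univ_pi (fun _ => measurableSet_ball)

lemma Dset_vol : volume Dset ≠ ⊤ := by
  have hsub : Dset ⊆ Metric.closedBall (0 : Fin 2 → ℂ) 1 := by
    intro z hz
    rw [Metric.mem_closedBall, dist_zero_right]
    apply pi_norm_le_iff_of_nonneg (by norm_num) |>.2
    intro i
    exact le_of_lt (by simpa using (hz : ∀ i, ‖z i‖ < 1) i)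
  exact ne_top_of_le_ne_top (IsCompact.measure_lt_top (isCompact_closedBall _ _)).ne
    (measure_mono hsub)

lemma integrableOn_mono (a b c d : ℕ) :
    IntegrableOn (fun z : Fin 2 → ℂ =>
      (z 0) ^ a * (starRingEnd ℂ) (z 0) ^ c * ((z 1) ^ b * (starRingEnd ℂ) (z 1) ^ d))
      Dset := by
  apply Measure.integrableOn_of_bounded (M := 1) Dset_vol
  · apply Continuous.aestronglyMeasurable
    exact (((continuous_apply 0).pow a).mul
        ((continuous_star.comp (continuous_apply 0)).pow c)).mul
      (((continuous_apply 1).pow b).mul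
        ((continuous_star.comp (continuous_apply 1)).pow d))
  · filter_upwards [ae_restrict_mem Dset_meas] with z hz
    have key : ∀ (w : ℂ) (k : ℕ), ‖w‖ < 1 → ‖w‖ ^ k ≤ 1 :=
      fun w k hw => pow_le_one₀ (norm_nonneg w) hw.le
    simp only [norm_mul, norm_pow, Complex.norm_conj]
    have h0 := (hz : ∀ i, ‖z i‖ < 1) 0
    have h1 := (hz : ∀ i, ‖z i‖ < 1) 1
    have n : ∀ (w : ℂ) (k : ℕ), (0:ℝ) ≤ ‖w‖ ^ k :=
      fun w k => pow_nonneg (norm_nonneg w) k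
    have A : ‖z 0‖ ^ a * ‖z 0‖ ^ c ≤ 1 :=
      mul_le_one₀ (key _ _ h0) (n _ _) (key _ _ h0)
    have B : ‖z 1‖ ^ b * ‖z 1‖ ^ d ≤ 1 :=
      mul_le_one₀ (key _ _ h1) (n _ _) (key _ _ h1)
    calc ‖z 0‖ ^ a * ‖z 0‖ ^ c
          * (‖z 1‖ ^ b * ‖z 1‖ ^ d)
        ≤ 1 * 1 := mul_le_mul A B (by positivity) (by norm_num)
      _ = 1 := by norm_num

lemma Nval (S : Finset ℕ) (c : ℕ → ℂ) (p q : ℕ → ℕ)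
    (hinj : ∀ j ∈ S, ∀ k ∈ S, p j = p k → q j = q k → j = k) :
    (∫ z in Dset,
        ‖∑ k ∈ S, c k * (z 0) ^ (p k) * (z 1) ^ (q k)‖ ^ 2 / Real.pi ^ 2)
      = ∑ k ∈ S, Complex.normSq (c k) / (((p k : ℝ) + 1) * ((q k : ℝ) + 1)) := by
  classical
  set f : (Fin 2 → ℂ) → ℂ := fun z => ∑ k ∈ S, c k * (z 0) ^ (p k) * (z 1) ^ (q k) with hfdef
  have step1 : (∫ z in Dset, ‖f z‖ ^ 2 / Real.pi ^ 2)
      = (∫ z in Dset, Complex.normSq (f z)) / Real.pi ^ 2 := by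
    rw [integral_div]
    congr 1
    apply integral_congr_ae
    filter_upwards with z
    exact Complex.sq_norm (f z)
  have step2 : ((∫ z in Dset, Complex.normSq (f z) : ℝ) : ℂ)
      = ∫ z in Dset, f z * (starRingEnd ℂ) (f z) := by
    have h2 : (fun z => f z * (starRingEnd ℂ) (f z))
        =ᵐ[volume.restrict Dset] fun z => ((Complex.normSq (f z) : ℝ) : ℂ) := by
      filter_upwards with z
      exact Complex.mul_conj (f z)
    rw [integral_congr_ae h2]
    exact (integral_ofReal (𝕜 := ℂ)).symm
  -- expand the product integral
  have hexp : ∀ z : Fin 2 → ℂ, f z * (starRingEnd ℂ) (f z)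
      = ∑ j ∈ S, ∑ k ∈ S, (c j * (starRingEnd ℂ) (c k))
          * ((z 0) ^ (p j) * (starRingEnd ℂ) (z 0) ^ (p k)
            * ((z 1) ^ (q j) * (starRingEnd ℂ) (z 1) ^ (q k))) := by
    intro z
    rw [hfdef]
    simp only [map_sum, Finset.sum_mul_sum, map_mul, map_pow]
    apply Finset.sum_congr rfl
    intro j _
    apply Finset.sum_congr rfl
    intro k _
    ring
  have hint : ∀ j ∈ S, ∀ k ∈ S, IntegrableOn (fun z : Fin 2 → ℂ =>
      (c j * (starRingEnd ℂ) (c k))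
        * ((z 0) ^ (p j) * (starRingEnd ℂ) (z 0) ^ (p k)
          * ((z 1) ^ (q j) * (starRingEnd ℂ) (z 1) ^ (q k)))) Dset := by
    intro j _ k _
    exact (integrableOn_mono (p j) (q j) (p k) (q k)).const_mul _
  have step3 : ∫ z in Dset, f z * (starRingEnd ℂ) (f z)
      = ∑ j ∈ S, ∑ k ∈ S, (c j * (starRingEnd ℂ) (c k))
          * ((if p j = p k then ((Real.pi / (p j + 1) : ℝ) : ℂ) else 0)
            * (if q j = q k then ((Real.pi / (q j + 1) : ℝ) : ℂ) else 0)) := by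
    rw [integral_congr_ae (Filter.Eventually.of_forall (fun z => hexp z))]
    rw [integral_finset_sum _ (fun j hj =>
      integrable_finset_sum _ (fun k hk => hint j hj k hk))]
    apply Finset.sum_congr rfl
    intro j hj
    rw [integral_finset_sum _ (fun k hk => hint j hj k hk)]
    apply Finset.sum_congr rfl
    intro k _
    rw [MeasureTheory.integral_const_mul]
    congr 1
    exact twoDim (p j) (q j) (p k) (q k)
  have step4 : ∑ j ∈ S, ∑ k ∈ S, (c j * (starRingEnd ℂ) (c k))
          * ((if p j = p k then ((Real.pi / (p j + 1) : ℝ) : ℂ) else 0)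
            * (if q j = q k then ((Real.pi / (q j + 1) : ℝ) : ℂ) else 0))
      = ((∑ j ∈ S, Complex.normSq (c j)
          * (Real.pi / (p j + 1) * (Real.pi / (q j + 1))) : ℝ) : ℂ) := by
    push_cast
    apply Finset.sum_congr rfl
    intro j hj
    rw [Finset.sum_eq_single_of_mem j hj]
    · rw [if_pos rfl, if_pos rfl, Complex.mul_conj]
    · intro k hk hkj
      by_cases hp : p j = p k
      · by_cases hq : q j = q k
        · exact absurd (hinj j hj k hk hp hq).symm hkj
        · rw [if_neg hq, mul_zero, mul_zero]
      · rw [if_neg hp, zero_mul, mul_zero]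
  rw [show (∫ z in Dset,
        ‖∑ k ∈ S, c k * (z 0) ^ (p k) * (z 1) ^ (q k)‖ ^ 2 / Real.pi ^ 2)
      = (∫ z in Dset, ‖f z‖ ^ 2 / Real.pi ^ 2) from rfl, step1]
  have : (∫ z in Dset, Complex.normSq (f z))
      = ∑ j ∈ S, Complex.normSq (c j) * (Real.pi / (p j + 1) * (Real.pi / (q j + 1))) := by
    have := step2.trans (step3.trans step4)
    exact_mod_cast this
  rw [this, Finset.sum_div]
  apply Finset.sum_congr rfl
  intro j _
  have hπ := Real.pi_ne_zero
  have h1 : ((p j : ℝ) + 1) ≠ 0 := by positivity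
  have h2 : ((q j : ℝ) + 1) ≠ 0 := by positivity
  field_simp

open Finset Filter

lemma refl_sum (m : ℕ) :
    ∑ k ∈ Finset.Icc 1 m, 1 / (((m:ℝ)+1) - k) = ∑ k ∈ Finset.Icc 1 m, 1 / (k:ℝ) := by
  apply Finset.sum_nbij' (i := fun k => m + 1 - k) (j := fun k => m + 1 - k)
  · intro a ha
    simp only [Finset.mem_Icc] at ha ⊢
    omega
  · intro a ha
    simp only [Finset.mem_Icc] at ha ⊢
    omega
  · intro a ha
    simp only [Finset.mem_Icc] at ha
    omega
  · intro a ha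
    simp only [Finset.mem_Icc] at ha
    omega
  · intro a ha
    simp only [Finset.mem_Icc] at ha
    congr 1
    rw [Nat.cast_sub (by omega)]
    push_cast
    ring

lemma harmonic_eq (m : ℕ) (hm : 1 ≤ m) :
    ((m:ℝ)+1)/2 * ∑ k ∈ Finset.Icc 1 m, 1 / ((((m:ℝ)+1) - k) * k)
      = ∑ k ∈ Finset.Icc 1 m, 1 / (k:ℝ) := by
  rw [Finset.mul_sum]
  have hsplit : ∀ k ∈ Finset.Icc 1 m,
      ((m:ℝ)+1)/2 * (1 / ((((m:ℝ)+1) - k) * k))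
        = 1/2 * (1/(k:ℝ)) + 1/2 * (1 / (((m:ℝ)+1) - k)) := by
    intro k hk
    simp only [Finset.mem_Icc] at hk
    have hk1 : (1:ℝ) ≤ (k:ℝ) := by exact_mod_cast hk.1
    have hk2 : (k:ℝ) ≤ m := by exact_mod_cast hk.2
    have h1 : (k:ℝ) ≠ 0 := by linarith
    have h2 : ((m:ℝ)+1) - k ≠ 0 := by linarith
    field_simp
    ring
  rw [Finset.sum_congr rfl hsplit, Finset.sum_add_distrib, ← Finset.mul_sum, ← Finset.mul_sum,
    refl_sum]
  ring

lemma harmonic_tendsto :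
    Tendsto (fun m : ℕ => ∑ k ∈ Finset.Icc 1 m, 1 / (k:ℝ)) atTop atTop := by
  have hcongr : ∀ m : ℕ, ∑ k ∈ Finset.Icc 1 m, 1 / (k:ℝ)
      = ∑ i ∈ Finset.range m, 1 / ((i:ℝ) + 1) := by
    intro m
    apply Finset.sum_nbij' (i := fun k => k - 1) (j := fun k => k + 1)
    · intro a ha
      simp only [Finset.mem_Icc] at ha
      simp only [Finset.mem_range]
      omega
    · intro a ha
      simp only [Finset.mem_range] at ha
      simp only [Finset.mem_Icc]
      omega
    · intro a ha
      simp only [Finset.mem_Icc] at ha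
      omega
    · intro a ha
      omega
    · intro a ha
      simp only [Finset.mem_Icc] at ha
      congr 1
      rw [Nat.cast_sub (by omega)]
      push_cast
      ring
  simp only [hcongr]
  exact Real.tendsto_sum_range_one_div_nat_succ_atTop

lemma Nh_val (m : ℕ) (hm : 1 ≤ m) :
    (∫ z in Dset, ‖∑ k ∈ Finset.Icc 1 m, (z 0) ^ (m - k) * (z 1) ^ (k - 1)‖ ^ 2
        / Real.pi ^ 2)
      = ∑ k ∈ Finset.Icc 1 m, 1 / ((((m:ℝ)+1) - k) * k) := by
  have hinj : ∀ j ∈ Finset.Icc 1 m, ∀ k ∈ Finset.Icc 1 m,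
      (fun k => m - k) j = (fun k => m - k) k → (fun k => k - 1) j = (fun k => k - 1) k
        → j = k := by
    intro j hj k hk hp hq
    simp only [Finset.mem_Icc] at hj hk
    simp only at hp hq
    omega
  have hcongr : (∫ z in Dset,
        ‖∑ k ∈ Finset.Icc 1 m, (z 0) ^ (m - k) * (z 1) ^ (k - 1)‖ ^ 2
        / Real.pi ^ 2)
      = ∫ z in Dset, ‖∑ k ∈ Finset.Icc 1 m,
          (fun _ : ℕ => (1:ℂ)) k * (z 0) ^ ((fun k => m - k) k) * (z 1) ^ ((fun k => k - 1) k)‖ ^ 2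
          / Real.pi ^ 2 := by
    apply integral_congr_ae
    filter_upwards with z
    simp
  rw [hcongr, Nval (Finset.Icc 1 m) (fun _ => (1:ℂ)) (fun k => m - k) (fun k => k - 1) hinj]
  apply Finset.sum_congr rfl
  intro k hk
  simp only [Finset.mem_Icc] at hk
  rw [Complex.normSq_one, Nat.cast_sub hk.2, Nat.cast_sub hk.1]
  push_cast
  congr 1
  ring

lemma Ne_val (m : ℕ) (hm : 1 ≤ m) :
    (∫ z in Dset, ‖(z 0) ^ m - (z 1) ^ m‖ ^ 2 / Real.pi ^ 2)
      = 2 / ((m:ℝ) + 1) := by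
  classical
  set c : ℕ → ℂ := fun j => if j = 0 then 1 else -1 with hc
  set p : ℕ → ℕ := fun j => if j = 0 then m else 0 with hp
  set q : ℕ → ℕ := fun j => if j = 0 then 0 else m with hq
  have hinj : ∀ j ∈ ({0, 1} : Finset ℕ), ∀ k ∈ ({0, 1} : Finset ℕ),
      p j = p k → q j = q k → j = k := by
    intro j hj k hk hpjk hqjk
    simp only [Finset.mem_insert, Finset.mem_singleton] at hj hk
    rcases hj with rfl | rfl <;> rcases hk with rfl | rfl
    · rfl
    · exfalso; simp [hp] at hpjk; omega
    · exfalso; simp [hp] at hpjk; omega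
    · rfl
  have hcongr : (∫ z in Dset, ‖(z 0) ^ m - (z 1) ^ m‖ ^ 2 / Real.pi ^ 2)
      = ∫ z in Dset, ‖∑ k ∈ ({0, 1} : Finset ℕ),
          c k * (z 0) ^ (p k) * (z 1) ^ (q k)‖ ^ 2 / Real.pi ^ 2 := by
    apply integral_congr_ae
    filter_upwards with z
    rw [Finset.sum_pair (by norm_num : (0:ℕ) ≠ 1)]
    simp [hc, hp, hq]
    ring_nf
  rw [hcongr, Nval ({0, 1} : Finset ℕ) c p q hinj,
    Finset.sum_pair (by norm_num : (0:ℕ) ≠ 1)]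
  simp only [hc, hp, hq, if_pos rfl, if_neg (one_ne_zero)]
  rw [Complex.normSq_one]
  rw [show Complex.normSq (-1) = 1 by simp]
  push_cast
  have h1 : ((m:ℝ) + 1) ≠ 0 := by positivity
  field_simp
  ring

/-- In the Bergman space `A^{(2)}(𝔻²)` (squared norm
`N(f) = π^{-2} ∫_{𝔻²} |f|²`), with `e_m = z₁^m - z₂^m` and
`h_m = Σ_{k=1}^m z₁^{m-k} z₂^{k-1}` (so `e_m = (z₁ - z₂) h_m`), one has
`N(h_m)/N(e_m) = (m+1)/2 · Σ_{k=1}^m 1/((m+1-k)k)`, this ratio tends to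
infinity, and hence division by `z₁ - z₂` is unbounded. -/
theorem stmt_17
    (D : Set (Fin 2 → ℂ)) (hD : D = {z | ∀ i, ‖z i‖ < 1})
    (N : ((Fin 2 → ℂ) → ℂ) → ℝ)
    (hN : ∀ f, N f = ∫ z in D, ‖f z‖ ^ 2 / Real.pi ^ 2)
    (e h : ℕ → (Fin 2 → ℂ) → ℂ)
    (he : ∀ m z, e m z = z 0 ^ m - z 1 ^ m)
    (hh : ∀ m z, h m z = ∑ k ∈ Finset.Icc 1 m, z 0 ^ (m - k) * z 1 ^ (k - 1)) :
    (∀ m : ℕ, 1 ≤ m →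
      N (h m) / N (e m)
        = ((m : ℝ) + 1) / 2 * ∑ k ∈ Finset.Icc 1 m, 1 / (((m : ℝ) + 1 - k) * k)) ∧
    Tendsto (fun m : ℕ => N (h m) / N (e m)) atTop atTop ∧
    ¬ ∃ C : ℝ, ∀ m : ℕ, 1 ≤ m → N (h m) ≤ C * N (e m) := by
  have hDD : D = Dset := hD
  have hNh : ∀ m : ℕ, 1 ≤ m →
      N (h m) = ∑ k ∈ Finset.Icc 1 m, 1 / ((((m:ℝ)+1) - k) * k) := by
    intro m hm
    rw [hN, hDD]
    have hcg : (∫ z in Dset, ‖h m z‖ ^ 2 / Real.pi ^ 2)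
        = ∫ z in Dset, 
            ‖∑ k ∈ Finset.Icc 1 m, (z 0) ^ (m - k) * (z 1) ^ (k - 1)‖ ^ 2 / Real.pi ^ 2 := by
      apply integral_congr_ae
      filter_upwards with z
      rw [hh]
    rw [hcg, Nh_val m hm]
  have hNe : ∀ m : ℕ, 1 ≤ m → N (e m) = 2 / ((m:ℝ) + 1) := by
    intro m hm
    rw [hN, hDD]
    have hcg : (∫ z in Dset, ‖e m z‖ ^ 2 / Real.pi ^ 2)
        = ∫ z in Dset, ‖(z 0) ^ m - (z 1) ^ m‖ ^ 2 / Real.pi ^ 2 := by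
      apply integral_congr_ae
      filter_upwards with z
      rw [he]
    rw [hcg, Ne_val m hm]
  have hratio : ∀ m : ℕ, 1 ≤ m → N (h m) / N (e m)
      = ((m : ℝ) + 1) / 2 * ∑ k ∈ Finset.Icc 1 m, 1 / (((m : ℝ) + 1 - k) * k) := by
    intro m hm
    rw [hNh m hm, hNe m hm, div_div_eq_mul_div]
    ring
  have htend : Tendsto (fun m : ℕ => N (h m) / N (e m)) atTop atTop := by
    have hev : (fun m : ℕ => ∑ k ∈ Finset.Icc 1 m, 1 / (k:ℝ))
        =ᶠ[atTop] (fun m : ℕ => N (h m) / N (e m)) := by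
      filter_upwards [eventually_ge_atTop 1] with m hm
      rw [hratio m hm, harmonic_eq m hm]
    exact harmonic_tendsto.congr' hev
  refine ⟨hratio, htend, ?_⟩
  rintro ⟨C, hC⟩
  obtain ⟨m, hm1, hm2⟩ := ((htend.eventually_gt_atTop C).and (eventually_ge_atTop 1)).exists
  have hepos : 0 < N (e m) := by
    rw [hNe m hm2]
    positivity
  have hle : N (h m) / N (e m) ≤ C := (div_le_iff₀ hepos).2 (hC m hm2)
  linarith
end
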